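/- For every positive integer n there exists a bijection Φ on the set of set partitions of [n] such that for every set partition 𝓑: op(Φ(𝓑)) = op(𝓑), cl(Φ(𝓑)) = cl(𝓑), the number of crossings of Φ(𝓑) equals the number of nestings of 𝓑, and the number of nestings of Φ(𝓑) equals the number of crossings of 𝓑. -/

import Mathlib

open scoped Classical
noncomputable section

/-! ### Set partitions of type A -/

/-- A set partition of `[n] = {1,…,n}`: pairwise disjoint nonempty blocks covering `[n]`. -/
structure SetPartitionA (n : ℕ) where
  blocks : Finset (Finset ℕ)
  nonempty : ∀ B ∈ blocks, B.Nonempty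
  disj : ∀ B ∈ blocks, ∀ B' ∈ blocks, B ≠ B' → Disjoint B B'
  cover : ∀ i : ℕ, (∃ B ∈ blocks, i ∈ B) ↔ i ∈ Finset.Icc 1 n

/-- Two arcs `(i,j)`, `(i',j')` cross if `i<i'<j<j'` (in either order of the two arcs). -/
def ACross (a b : ℕ × ℕ) : Prop :=
  (a.1 < b.1 ∧ b.1 < a.2 ∧ a.2 < b.2) ∨ (b.1 < a.1 ∧ a.1 < b.2 ∧ b.2 < a.2)

/-- Two arcs `(i,j)`, `(i',j')` nest if `i<i'<j'<j` (in either order of the two arcs). -/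
def ANest (a b : ℕ × ℕ) : Prop :=
  (a.1 < b.1 ∧ b.1 < b.2 ∧ b.2 < a.2) ∨ (b.1 < a.1 ∧ a.1 < a.2 ∧ a.2 < b.2)

namespace SetPartitionA

variable {n : ℕ}

/-- Openers: elements of `[n]` that are not the maximum of their block. -/
def openers (P : SetPartitionA n) : Finset ℕ :=
  (Finset.Icc 1 n).filter fun i => ∃ B ∈ P.blocks, i ∈ B ∧ ∃ j ∈ B, i < j

/-- Closers: elements of `[n]` that are not the minimum of their block. -/
def closers (P : SetPartitionA n) : Finset ℕ :=
  (Finset.Icc 1 n).filter fun i => ∃ B ∈ P.blocks, i ∈ B ∧ ∃ j ∈ B, j < i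

/-- `(i,j)` is an arc: `i < j` are in the same block with no block element in between. -/
def IsArc (P : SetPartitionA n) (i j : ℕ) : Prop :=
  i < j ∧ ∃ B ∈ P.blocks, i ∈ B ∧ j ∈ B ∧ ∀ k ∈ B, ¬(i < k ∧ k < j)

/-- The finite set of arcs of `P`. -/
def arcs (P : SetPartitionA n) : Finset (ℕ × ℕ) :=
  ((Finset.Icc 1 n) ×ˢ (Finset.Icc 1 n)).filter fun p => P.IsArc p.1 p.2

/-- The number of crossings: pairs of arcs `(i,j)`, `(i',j')` with `i<i'<j<j'`. -/
def crossings (P : SetPartitionA n) : ℕ :=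
  ((P.arcs ×ˢ P.arcs).filter fun q =>
    q.1.1 < q.2.1 ∧ q.2.1 < q.1.2 ∧ q.1.2 < q.2.2).card

/-- The number of nestings: pairs of arcs `(i,j)`, `(i',j')` with `i<i'<j'<j`. -/
def nestings (P : SetPartitionA n) : ℕ :=
  ((P.arcs ×ˢ P.arcs).filter fun q =>
    q.1.1 < q.2.1 ∧ q.2.1 < q.2.2 ∧ q.2.2 < q.1.2).card

/-- The cardinality of a maximal crossing: largest set of mutually crossing arcs. -/
def maxCrossing (P : SetPartitionA n) : ℕ :=
  (P.arcs.powerset.filter fun S => ∀ a ∈ S, ∀ b ∈ S, a ≠ b → ACross a b).sup Finset.card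

/-- The cardinality of a maximal nesting: largest set of mutually nesting arcs. -/
def maxNesting (P : SetPartitionA n) : ℕ :=
  (P.arcs.powerset.filter fun S => ∀ a ∈ S, ∀ b ∈ S, a ≠ b → ANest a b).sup Finset.card

end SetPartitionA

/-! ### Set partitions of classical types B/C/D on `[±n]` -/

/-- Position of `i ∈ [±n]` in the type `C` nesting order `1<⋯<n<-n<⋯<-1`. -/
def nestOrd (n : ℕ) (i : ℤ) : ℤ := if 0 < i then i else 2 * n + 1 + i

/-- Position of `i ∈ [±n]` in the crossing order `1<⋯<n<-1<⋯<-n`. -/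
def crossOrd (n : ℕ) (i : ℤ) : ℤ := if 0 < i then i else (n : ℤ) - i

/-- Position of `i ∈ [±n] ∪ {0}` in the type `B` nesting order `1<⋯<n<0<-n<⋯<-1`. -/
def nestOrdB (n : ℕ) (i : ℤ) : ℤ :=
  if 0 < i then i else if i = 0 then (n : ℤ) + 1 else 2 * n + 2 + i

/-- The negative `-B` of a block. -/
def negSet (B : Finset ℤ) : Finset ℤ := B.image fun x => -x

/-- A set partition of type `B_n`/`C_n`: a set partition of `[±n]` with `B ∈ 𝓑 ↔ -B ∈ 𝓑`
and at most one block `B₀` with `B₀ = -B₀`. -/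
structure SetPartitionC (n : ℕ) where
  blocks : Finset (Finset ℤ)
  nonempty : ∀ B ∈ blocks, B.Nonempty
  disj : ∀ B ∈ blocks, ∀ B' ∈ blocks, B ≠ B' → Disjoint B B'
  cover : ∀ i : ℤ, (∃ B ∈ blocks, i ∈ B) ↔ (i ≠ 0 ∧ |i| ≤ (n : ℤ))
  symm : ∀ B ∈ blocks, negSet B ∈ blocks
  zeroBlock : ∀ B ∈ blocks, ∀ B' ∈ blocks, negSet B = B → negSet B' = B' → B = B'

/-- Endpoints of an arc, ordered by the crossing order. -/
def cpr (n : ℕ) (p : ℤ × ℤ) : ℤ × ℤ :=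
  (min (crossOrd n p.1) (crossOrd n p.2), max (crossOrd n p.1) (crossOrd n p.2))

/-- `p` crosses `q` with `p` coming first in the crossing order. -/
def CrossRel (n : ℕ) (p q : ℤ × ℤ) : Prop :=
  (cpr n p).1 < (cpr n q).1 ∧ (cpr n q).1 < (cpr n p).2 ∧ (cpr n p).2 < (cpr n q).2

/-- The two arcs `p`, `q` cross in the crossing diagram. -/
def Crosses (n : ℕ) (p q : ℤ × ℤ) : Prop := CrossRel n p q ∨ CrossRel n q p

/-- `p` nests over `q` in the nesting diagram (arcs written in nesting order). -/
def NestRel (n : ℕ) (p q : ℤ × ℤ) : Prop :=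
  nestOrd n p.1 < nestOrd n q.1 ∧ nestOrd n q.2 < nestOrd n p.2

/-- The two arcs `p`, `q` nest in the nesting diagram. -/
def Nests (n : ℕ) (p q : ℤ × ℤ) : Prop := NestRel n p q ∨ NestRel n q p

/-- `p` nests over `q` in the type `B` nesting diagram. -/
def NestRelB (n : ℕ) (p q : ℤ × ℤ) : Prop :=
  nestOrdB n p.1 < nestOrdB n q.1 ∧ nestOrdB n q.2 < nestOrdB n p.2

/-- The two arcs `p`, `q` nest in the type `B` nesting diagram. -/
def NestsB (n : ℕ) (p q : ℤ × ℤ) : Prop := NestRelB n p q ∨ NestRelB n q p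

/-- Exceptional pairs for type `B` crossings: both arcs have positive opener and negative
closer, and at least one closer is smaller in absolute value than its opener. -/
def ExcCross (p q : ℤ × ℤ) : Prop :=
  0 < p.1 ∧ p.2 < 0 ∧ 0 < q.1 ∧ q.2 < 0 ∧ (|p.2| < |p.1| ∨ |q.2| < |q.1|)

/-- Exceptional pairs for type `B` nestings: both arcs have positive opener (or begin at `0`)
and negative closer (or end at `0`), and at least one closer is smaller in absolute value
than its opener. -/
def ExcNest (p q : ℤ × ℤ) : Prop :=
  0 ≤ p.1 ∧ p.2 ≤ 0 ∧ 0 ≤ q.1 ∧ q.2 ≤ 0 ∧ (|p.2| < |p.1| ∨ |q.2| < |q.1|)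

/-- A block augmented by `0` if it is the zero block. -/
def augB (B : Finset ℤ) : Finset ℤ := if negSet B = B then insert 0 B else B

/-- The arc `p` contains `n`. -/
def ContainsN (n : ℕ) (p : ℤ × ℤ) : Prop := p.1 = (n : ℤ) ∨ p.2 = (n : ℤ)

/-- The arc `p` contains `-n`. -/
def ContainsNegN (n : ℕ) (p : ℤ × ℤ) : Prop := p.1 = -(n : ℤ) ∨ p.2 = -(n : ℤ)

namespace SetPartitionC

variable {n : ℕ}

/-- The ground set `[±n]` as a finset of integers. -/
def pmn (n : ℕ) : Finset ℤ := (Finset.Icc (-(n : ℤ)) (n : ℤ)).erase 0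

/-- `(i,j)` is an arc: `i`, `j` are consecutive elements of a block in the nesting order. -/
def IsArc (P : SetPartitionC n) (i j : ℤ) : Prop :=
  nestOrd n i < nestOrd n j ∧ ∃ B ∈ P.blocks, i ∈ B ∧ j ∈ B ∧
    ∀ k ∈ B, ¬(nestOrd n i < nestOrd n k ∧ nestOrd n k < nestOrd n j)

/-- The finite set of arcs of `P` (written in nesting order). -/
def arcs (P : SetPartitionC n) : Finset (ℤ × ℤ) :=
  (pmn n ×ˢ pmn n).filter fun p => P.IsArc p.1 p.2

/-- Openers: positive elements that are not maximal in their block w.r.t. the nesting order. -/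
def openers (P : SetPartitionC n) : Finset ℤ :=
  (Finset.Icc 1 (n : ℤ)).filter fun i =>
    ∃ B ∈ P.blocks, i ∈ B ∧ ∃ j ∈ B, nestOrd n i < nestOrd n j

/-- Closers: positive elements that are not minimal in their block w.r.t. the nesting order. -/
def closers (P : SetPartitionC n) : Finset ℤ :=
  (Finset.Icc 1 (n : ℤ)).filter fun i =>
    ∃ B ∈ P.blocks, i ∈ B ∧ ∃ j ∈ B, nestOrd n j < nestOrd n i

/-- The number of crossings of a type `C` set partition. -/
def crossings (P : SetPartitionC n) : ℕ :=
  ((P.arcs ×ˢ P.arcs).filter fun q => CrossRel n q.1 q.2).card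

/-- The number of nestings of a type `C` set partition. -/
def nestings (P : SetPartitionC n) : ℕ :=
  ((P.arcs ×ˢ P.arcs).filter fun q => NestRel n q.1 q.2).card

/-- The number of crossings among pairs of arcs that both have positive opener. -/
def crossingsPos (P : SetPartitionC n) : ℕ :=
  (((P.arcs.filter fun p => 0 < p.1) ×ˢ (P.arcs.filter fun p => 0 < p.1)).filter
    fun q => CrossRel n q.1 q.2).card

/-- The number of nestings among pairs of arcs that both have positive opener. -/
def nestingsPos (P : SetPartitionC n) : ℕ :=
  (((P.arcs.filter fun p => 0 < p.1) ×ˢ (P.arcs.filter fun p => 0 < p.1)).filter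
    fun q => NestRel n q.1 q.2).card

/-- The cardinality of a maximal crossing. -/
def maxCrossing (P : SetPartitionC n) : ℕ :=
  (P.arcs.powerset.filter fun S => ∀ a ∈ S, ∀ b ∈ S, a ≠ b → Crosses n a b).sup Finset.card

/-- The cardinality of a maximal nesting. -/
def maxNesting (P : SetPartitionC n) : ℕ :=
  (P.arcs.powerset.filter fun S => ∀ a ∈ S, ∀ b ∈ S, a ≠ b → Nests n a b).sup Finset.card

/-! ### Type B notions -/

/-- `(i,j)` is a type `B` nesting arc: consecutive elements of an augmented block in the
type `B` nesting order. -/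
def IsArcB (P : SetPartitionC n) (i j : ℤ) : Prop :=
  nestOrdB n i < nestOrdB n j ∧ ∃ B ∈ P.blocks, i ∈ augB B ∧ j ∈ augB B ∧
    ∀ k ∈ augB B, ¬(nestOrdB n i < nestOrdB n k ∧ nestOrdB n k < nestOrdB n j)

/-- The finite set of type `B` nesting arcs of `P`. -/
def arcsB (P : SetPartitionC n) : Finset (ℤ × ℤ) :=
  ((insert 0 (pmn n)) ×ˢ (insert 0 (pmn n))).filter fun p => P.IsArcB p.1 p.2

/-- The number of type `B` crossings. -/
def crossingsB (P : SetPartitionC n) : ℕ :=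
  ((P.arcs ×ˢ P.arcs).filter fun q => CrossRel n q.1 q.2 ∧ ¬ExcCross q.1 q.2).card

/-- The number of type `B` nestings. -/
def nestingsB (P : SetPartitionC n) : ℕ :=
  ((P.arcsB ×ˢ P.arcsB).filter fun q => NestRelB n q.1 q.2 ∧ ¬ExcNest q.1 q.2).card

/-- Openers in type `B`: positive elements not maximal in their block
w.r.t. the type `B` nesting order. -/
def openersB (P : SetPartitionC n) : Finset ℤ :=
  (Finset.Icc 1 (n : ℤ)).filter fun i =>
    ∃ B ∈ P.blocks, i ∈ B ∧ ∃ j ∈ B, nestOrdB n i < nestOrdB n j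

/-- Closers in type `B`: positive elements not minimal in their block
w.r.t. the type `B` nesting order. -/
def closersB (P : SetPartitionC n) : Finset ℤ :=
  (Finset.Icc 1 (n : ℤ)).filter fun i =>
    ∃ B ∈ P.blocks, i ∈ B ∧ ∃ j ∈ B, nestOrdB n j < nestOrdB n i

/-- The cardinality of a maximal type `B` crossing. -/
def maxCrossingB (P : SetPartitionC n) : ℕ :=
  (P.arcs.powerset.filter fun S =>
    ∀ a ∈ S, ∀ b ∈ S, a ≠ b → Crosses n a b ∧ ¬ExcCross a b).sup Finset.card

/-- The cardinality of a maximal type `B` nesting. -/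
def maxNestingB (P : SetPartitionC n) : ℕ :=
  (P.arcsB.powerset.filter fun S =>
    ∀ a ∈ S, ∀ b ∈ S, a ≠ b → NestsB n a b ∧ ¬ExcNest a b).sup Finset.card

/-! ### Type D notions -/

/-- A type `C` set partition is of type `D` if the zero block, when present, is not a single
pair `{i,-i}`. -/
def IsTypeD (P : SetPartitionC n) : Prop :=
  ∀ B ∈ P.blocks, negSet B = B → B.card ≠ 2

/-- The arcs starting in `{1,…,n-1}` and ending in the negative of an element of `{1,…,n-1}`. -/
def pnArcs (P : SetPartitionC n) : Finset (ℤ × ℤ) :=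
  P.arcs.filter fun p => 0 < p.1 ∧ p.1 < (n : ℤ) ∧ -(n : ℤ) < p.2 ∧ p.2 < 0

/-- The index `l` of an arc `a = (i_l, -j_l)` in the list of `pnArcs` ordered by openers. -/
def dRank (P : SetPartitionC n) (a : ℤ × ℤ) : ℕ :=
  (P.pnArcs.filter fun b => b.1 ≤ a.1).card

/-- The crossings allowed in a non-crossing set partition of type `D`. -/
def AllowedCrossD (P : SetPartitionC n) (p q : ℤ × ℤ) : Prop :=
  (ContainsN n p ∧ q ∈ P.pnArcs ∧ P.pnArcs.card < 2 * P.dRank q) ∨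
  (ContainsN n q ∧ p ∈ P.pnArcs ∧ P.pnArcs.card < 2 * P.dRank p) ∨
  (ContainsNegN n p ∧ q ∈ P.pnArcs ∧ 2 * P.dRank q ≤ P.pnArcs.card) ∨
  (ContainsNegN n q ∧ p ∈ P.pnArcs ∧ 2 * P.dRank p ≤ P.pnArcs.card) ∨
  (ContainsN n p ∧ ContainsNegN n q) ∨
  (ContainsN n q ∧ ContainsNegN n p)

/-- `P` is a non-crossing set partition of type `D_n`. -/
def NonCrossingD (P : SetPartitionC n) : Prop :=
  (∀ i : ℤ, 0 < i → P.IsArc i (-i) → i = n) ∧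
  (∀ p ∈ P.arcs, ∀ q ∈ P.arcs, Crosses n p q → P.AllowedCrossD p q) ∧
  (∀ p ∈ P.arcs, ContainsN n p →
    ∀ q ∈ P.pnArcs, P.pnArcs.card < 2 * P.dRank q → Crosses n p q) ∧
  (∀ p ∈ P.arcs, ContainsNegN n p →
    ∀ q ∈ P.pnArcs, 2 * P.dRank q ≤ P.pnArcs.card → Crosses n p q)

/-- The nestings (`p` over `q`) allowed in a non-nesting set partition of type `D`. -/
def AllowedNestD (P : SetPartitionC n) (p q : ℤ × ℤ) : Prop :=
  (0 < p.1 ∧ p.1 < q.1 ∧ q.1 < (n : ℤ) ∧ p.2 = -(n : ℤ) ∧ q.2 = (n : ℤ)) ∨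
  (q.1 = (n : ℤ) ∧ q.2 = -(n : ℤ) ∧ 0 < p.1 ∧ p.1 < (n : ℤ) ∧ -(n : ℤ) < p.2 ∧ p.2 < 0 ∧
    ∃ m : ℤ, 0 < m ∧ m < p.1 ∧ m < -p.2 ∧ P.IsArc m (n : ℤ))

/-- `P` is a non-nesting set partition of type `D_n`. -/
def NonNestingD (P : SetPartitionC n) : Prop :=
  (∀ i : ℤ, 0 < i → P.IsArc i (-i) → i = n) ∧
  (∀ p ∈ P.arcs, ∀ q ∈ P.arcs, NestRel n p q → P.AllowedNestD p q)

end SetPartitionC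

/-! ### The staircase polyomino and chains in fillings -/

/-- The cells of the staircase polyomino `P_n`: `(c,r)` with `1 ≤ c ≤ n`, `c ≤ r ≤ 2n-1`. -/
def cellsP (n : ℕ) : Finset (ℕ × ℕ) :=
  ((Finset.Icc 1 n) ×ˢ (Finset.Icc 1 (2 * n - 1))).filter fun p => p.1 ≤ p.2

/-- The length of the longest north-east chain among a set of (nonzero) cells:
columns strictly increase while rows strictly decrease. -/
def neLen (S : Finset (ℕ × ℕ)) : ℕ :=
  (S.powerset.filter fun T =>
    ∀ a ∈ T, ∀ b ∈ T, a ≠ b →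
      (a.1 < b.1 ∧ b.2 < a.2) ∨ (b.1 < a.1 ∧ a.2 < b.2)).sup Finset.card

/-- The length of the longest south-east chain among a set of (nonzero) cells:
columns and rows strictly increase, and the surrounding rectangle lies in the polyomino
(`a.1 ≤ b.2` for all cells `a`, `b` of the chain). -/
def seLen (S : Finset (ℕ × ℕ)) : ℕ :=
  (S.powerset.filter fun T =>
    (∀ a ∈ T, ∀ b ∈ T, a ≠ b →
      (a.1 < b.1 ∧ a.2 < b.2) ∨ (b.1 < a.1 ∧ b.2 < a.2)) ∧
    ∀ a ∈ T, ∀ b ∈ T, a.1 ≤ b.2).sup Finset.card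

namespace SetPartitionC

variable {n : ℕ}

/-- The cells filled with `1` in the nesting filling of the staircase polyomino: rows are
labelled from top to bottom by `2,…,n,-n,…,-1`; the cell in column `i` and row labelled `j`
is filled iff `(i,j)` is an arc with positive opener `i`. -/
def nestFill (P : SetPartitionC n) : Finset (ℕ × ℕ) :=
  (cellsP n).filter fun c => ∃ j : ℤ, P.IsArc (c.1 : ℤ) j ∧ nestOrd n j = (c.2 : ℤ) + 1

/-- The cells filled with `1` in the crossing filling of the staircase polyomino: rows are
labelled from top to bottom by `2,…,n,-1,…,-n`; the cell in column `i` and row labelled `j`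
is filled iff `(i,j)` is an arc with positive opener `i`. -/
def crossFill (P : SetPartitionC n) : Finset (ℕ × ℕ) :=
  (cellsP n).filter fun c => ∃ j : ℤ, P.IsArc (c.1 : ℤ) j ∧ crossOrd n j = (c.2 : ℤ) + 1

end SetPartitionC

/-! ### Triangulations of the symmetric 2n-gon and symmetric fans of Dyck paths -/

/-- `p` is a diagonal of the `2n`-gon with vertices labelled by `[±n]`, written with its two
(distinct) endpoints in crossing order. -/
def IsDiag (n : ℕ) (p : ℤ × ℤ) : Prop :=
  p.1 ≠ 0 ∧ p.2 ≠ 0 ∧ |p.1| ≤ (n : ℤ) ∧ |p.2| ≤ (n : ℤ) ∧ crossOrd n p.1 < crossOrd n p.2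

/-- Normalize a pair so that its endpoints are in crossing order. -/
def normD (n : ℕ) (p : ℤ × ℤ) : ℤ × ℤ :=
  if crossOrd n p.1 < crossOrd n p.2 then p else (p.2, p.1)

/-- `ω` contains `m` mutually crossing diagonals. -/
def HasMCross (n m : ℕ) (ω : Finset (ℤ × ℤ)) : Prop :=
  ∃ S ⊆ ω, S.card = m ∧ ∀ a ∈ S, ∀ b ∈ S, a ≠ b → Crosses n a b

/-- A type `C_n` `k`-triangulation: a symmetric set of diagonals with no `(k+1)`-crossing,
maximal with this property. -/
def IsTriangC (n k : ℕ) (ω : Finset (ℤ × ℤ)) : Prop :=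
  (∀ p ∈ ω, IsDiag n p) ∧
  (∀ p ∈ ω, normD n (-p.1, -p.2) ∈ ω) ∧
  ¬HasMCross n (k + 1) ω ∧
  ∀ d : ℤ × ℤ, IsDiag n d → d ∉ ω → HasMCross n (k + 1) (insert d ω)

/-- A Dyck path in the staircase polyomino starting at the top cell `(i,i)` of column `i`,
proceeding by unit south or west steps inside `P_n`, and ending on the main diagonal
`r = 2n - c`. -/
def IsDyckPath (n i : ℕ) (l : List (ℕ × ℕ)) : Prop :=
  l ≠ [] ∧ l.head? = some (i, i) ∧ (∀ c ∈ l, c ∈ cellsP n) ∧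
  l.Chain' (fun a b => (b.1 = a.1 ∧ b.2 = a.2 + 1) ∨ (b.1 + 1 = a.1 ∧ b.2 = a.2)) ∧
  ∀ c : ℕ × ℕ, l.getLast? = some c → c.2 = 2 * n - c.1

/-- A symmetric fan of `k` non-intersecting Dyck paths: the `i`-th path starts at cell
`(i,i)` and the paths are pairwise cell-disjoint. -/
def IsSymFan (n k : ℕ) (f : Fin k → List (ℕ × ℕ)) : Prop :=
  (∀ i : Fin k, IsDyckPath n ((i : ℕ) + 1) (f i)) ∧
  ∀ i j : Fin k, i ≠ j → ∀ c ∈ f i, c ∉ f j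

/-!
A set partition is determined by its arcs. Just before a closer `j`, the open arcs have a set of
`m_j` pending openers, and `m_j` depends only on which points are openers and which are closers.
If the arc ending at `j` starts at the pending opener of rank `r_j` (counting from `0`), it is the
inner arc of exactly `r_j` nestings and the left arc of exactly `m_j - 1 - r_j` crossings, so
summing over the closers counts every nesting and every crossing once. Conversely, a left-to-right
sweep that matches each closer with its pending opener of a prescribed rank builds an arc diagram
from any ranks `r_j < m_j`, and the ranks determine the diagram. Replacing every `r_j` by
`m_j - 1 - r_j` is therefore an involution that keeps openers and closers and exchanges crossings
with nestings.
-/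

namespace Nat

variable {s : Finset ℕ}

theorem nth_mem_finset {k : ℕ} (hk : k < s.card) : nth (· ∈ s) k ∈ s :=
  nth_mem_of_lt_card s.finite_toSet (by rwa [Finset.finite_toSet_toFinset])

theorem count_nth_mem_finset {k : ℕ} (hk : k < s.card) : count (· ∈ s) (nth (· ∈ s) k) = k :=
  count_nth_of_lt_card_finite s.finite_toSet (by rwa [Finset.finite_toSet_toFinset])

theorem count_mem_finset_lt_card {x : ℕ} (hx : x ∈ s) : count (· ∈ s) x < s.card := by
  simpa using count_lt_card s.finite_toSet hx

theorem count_mem_finset_eq_card_filter_lt (s : Finset ℕ) (x : ℕ) :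
    count (· ∈ s) x = (s.filter (· < x)).card := by
  rw [count_eq_card_filter_range]
  congr 1
  ext y
  simp [and_comm]

theorem card_filter_gt_eq_card_sub_count {x : ℕ} (hx : x ∈ s) :
    (s.filter (x < ·)).card = s.card - 1 - count (· ∈ s) x := by
  have hge : s.filter (fun y => ¬y < x) = insert x (s.filter (x < ·)) := by
    ext y
    simp only [Finset.mem_filter, Finset.mem_insert]
    grind
  have hsplit := Finset.card_filter_add_card_filter_not (s := s) (p := (· < x))
  rw [hge, Finset.card_insert_of_notMem (by simp)] at hsplit
  rw [count_mem_finset_eq_card_filter_lt]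
  omega

end Nat

theorem Finset.card_filter_product_eq_sum {α β : Type*} (s : Finset α) (t : Finset β)
    (P : α × β → Prop) [DecidablePred P] :
    ((s ×ˢ t).filter P).card = ∑ a ∈ s, (t.filter fun b => P (a, b)).card := by
  simp only [Finset.card_filter, Finset.sum_product]

theorem Finset.card_filter_product_eq_sum_right {α β : Type*} (s : Finset α) (t : Finset β)
    (P : α × β → Prop) [DecidablePred P] :
    ((s ×ˢ t).filter P).card = ∑ b ∈ t, (s.filter fun a => P (a, b)).card := by
  simp only [Finset.card_filter, Finset.sum_product_right]

theorem Finset.filter_snd_lt_add_one {α : Type*} (A : Finset (α × ℕ)) (j : ℕ) :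
    A.filter (·.2 < j + 1) = A.filter (·.2 < j) ∪ A.filter (·.2 = j) := by
  ext p
  simp only [Finset.mem_filter, Finset.mem_union, ← and_or_left, Nat.lt_succ_iff_lt_or_eq]

structure IsArcDiagram (n : ℕ) (A : Finset (ℕ × ℕ)) : Prop where
  one_le_fst : ∀ p ∈ A, 1 ≤ p.1
  fst_lt_snd : ∀ p ∈ A, p.1 < p.2
  snd_le : ∀ p ∈ A, p.2 ≤ n
  injOn_fst : Set.InjOn Prod.fst (A : Set (ℕ × ℕ))
  injOn_snd : Set.InjOn Prod.snd (A : Set (ℕ × ℕ))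

namespace ArcDiagram

open Finset

def pending (A : Finset (ℕ × ℕ)) (j : ℕ) : Finset ℕ :=
  (A.filter fun p => p.1 < j ∧ j ≤ p.2).image Prod.fst

def opener (A : Finset (ℕ × ℕ)) (j : ℕ) : ℕ :=
  if h : ∃ p ∈ A, p.2 = j then h.choose.1 else 0

def closerRank (A : Finset (ℕ × ℕ)) (j : ℕ) : ℕ :=
  Nat.count (· ∈ pending A j) (opener A j)

def crossCount (A : Finset (ℕ × ℕ)) : ℕ :=
  ((A ×ˢ A).filter fun q => q.1.1 < q.2.1 ∧ q.2.1 < q.1.2 ∧ q.1.2 < q.2.2).card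

def nestCount (A : Finset (ℕ × ℕ)) : ℕ :=
  ((A ×ˢ A).filter fun q => q.1.1 < q.2.1 ∧ q.2.1 < q.2.2 ∧ q.2.2 < q.1.2).card

end ArcDiagram

namespace IsArcDiagram

open Finset ArcDiagram

variable {n : ℕ} {A A' : Finset (ℕ × ℕ)}

theorem fst_mem_Icc (hA : IsArcDiagram n A) {p : ℕ × ℕ} (hp : p ∈ A) : p.1 ∈ Icc 1 n :=
  mem_Icc.2 ⟨hA.one_le_fst p hp, (hA.fst_lt_snd p hp).le.trans (hA.snd_le p hp)⟩

theorem snd_mem_Icc (hA : IsArcDiagram n A) {p : ℕ × ℕ} (hp : p ∈ A) : p.2 ∈ Icc 1 n :=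
  mem_Icc.2 ⟨(hA.one_le_fst p hp).trans (hA.fst_lt_snd p hp).le, hA.snd_le p hp⟩

theorem opener_snd (hA : IsArcDiagram n A) {p : ℕ × ℕ} (hp : p ∈ A) : opener A p.2 = p.1 := by
  have h : ∃ q ∈ A, q.2 = p.2 := ⟨p, hp, rfl⟩
  rw [opener, dif_pos h, hA.injOn_snd h.choose_spec.1 hp h.choose_spec.2]

theorem fst_mem_pending (hA : IsArcDiagram n A) {p : ℕ × ℕ} (hp : p ∈ A) :
    p.1 ∈ pending A p.2 :=
  mem_image_of_mem _ (mem_filter.2 ⟨hp, hA.fst_lt_snd p hp, le_rfl⟩)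

theorem closerRank_lt (hA : IsArcDiagram n A) {j : ℕ} (hj : j ∈ A.image Prod.snd) :
    closerRank A j < (pending A j).card := by
  obtain ⟨p, hp, rfl⟩ := mem_image.1 hj
  exact Nat.count_mem_finset_lt_card (hA.opener_snd hp ▸ hA.fst_mem_pending hp)

theorem pending_eq (hA : IsArcDiagram n A) (j : ℕ) :
    pending A j = (A.image Prod.fst ∩ Ico 1 j) \ (A.filter (·.2 < j)).image Prod.fst := by
  ext i
  simp only [pending, mem_image, mem_filter, mem_sdiff, mem_inter, mem_Ico]
  constructor
  · rintro ⟨p, ⟨hp, hpj, hjp⟩, rfl⟩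
    refine ⟨⟨⟨p, hp, rfl⟩, hA.one_le_fst p hp, hpj⟩, ?_⟩
    rintro ⟨q, ⟨hq, hqj⟩, hqp⟩
    have := hA.injOn_fst hq hp hqp
    subst this
    omega
  · rintro ⟨⟨⟨p, hp, rfl⟩, -, hpj⟩, hclosed⟩
    exact ⟨p, ⟨hp, hpj, not_lt.1 fun h => hclosed ⟨p, ⟨hp, h⟩, rfl⟩⟩, rfl⟩

theorem card_pending (hA : IsArcDiagram n A) (j : ℕ) :
    (pending A j).card =
      (A.image Prod.fst ∩ Ico 1 j).card - (A.image Prod.snd ∩ Ico 1 j).card := by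
  have hclosed_fst : (A.filter (·.2 < j)).image Prod.fst ⊆ A.image Prod.fst ∩ Ico 1 j := by
    intro i hi
    obtain ⟨p, hp, rfl⟩ := mem_image.1 hi
    obtain ⟨hpA, hpj⟩ := mem_filter.1 hp
    have := hA.fst_lt_snd p hpA
    exact mem_inter.2 ⟨mem_image_of_mem _ hpA, mem_Ico.2 ⟨hA.one_le_fst p hpA, by omega⟩⟩
  have hclosed_snd : (A.filter (·.2 < j)).image Prod.snd = A.image Prod.snd ∩ Ico 1 j := by
    ext k
    simp only [mem_image, mem_filter, mem_inter, mem_Ico]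
    constructor
    · rintro ⟨p, ⟨hp, hpj⟩, rfl⟩
      have := hA.one_le_fst p hp
      have := hA.fst_lt_snd p hp
      exact ⟨⟨p, hp, rfl⟩, by omega, hpj⟩
    · rintro ⟨⟨p, hp, rfl⟩, -, hpj⟩
      exact ⟨p, ⟨hp, hpj⟩, rfl⟩
  rw [hA.pending_eq, card_sdiff_of_subset hclosed_fst, ← hclosed_snd,
    card_image_of_injOn (hA.injOn_fst.mono (coe_subset.2 (filter_subset _ _))),
    card_image_of_injOn (hA.injOn_snd.mono (coe_subset.2 (filter_subset _ _)))]

theorem card_filter_pending (hA : IsArcDiagram n A) (j : ℕ) (q : ℕ → Prop) [DecidablePred q] :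
    ((pending A j).filter q).card = (A.filter fun b => b.1 < j ∧ j ≤ b.2 ∧ q b.1).card := by
  rw [pending, filter_image, filter_filter,
    card_image_of_injOn (hA.injOn_fst.mono (coe_subset.2 (filter_subset _ _)))]
  simp only [and_assoc]

theorem crossCount_eq_sum (hA : IsArcDiagram n A) :
    crossCount A = ∑ j ∈ A.image Prod.snd, ((pending A j).card - 1 - closerRank A j) := by
  rw [crossCount, card_filter_product_eq_sum, sum_image (fun p hp q hq => hA.injOn_snd hp hq)]
  refine sum_congr rfl fun a ha => ?_
  rw [closerRank, hA.opener_snd ha,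
    ← Nat.card_filter_gt_eq_card_sub_count (hA.fst_mem_pending ha), hA.card_filter_pending]
  congr 1
  refine filter_congr fun b hb => ?_
  dsimp only
  constructor
  · rintro ⟨h1, h2, h3⟩
    exact ⟨h2, h3.le, h1⟩
  · rintro ⟨h1, h2, h3⟩
    refine ⟨h3, h1, lt_of_le_of_ne h2 fun h => ?_⟩
    rw [hA.injOn_snd hb ha h.symm] at h3
    exact h3.false

theorem nestCount_eq_sum (hA : IsArcDiagram n A) :
    nestCount A = ∑ j ∈ A.image Prod.snd, closerRank A j := by
  rw [nestCount, card_filter_product_eq_sum_right, sum_image (fun p hp q hq => hA.injOn_snd hp hq)]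
  refine sum_congr rfl fun b hb => ?_
  rw [closerRank, hA.opener_snd hb, Nat.count_mem_finset_eq_card_filter_lt,
    hA.card_filter_pending]
  congr 1
  refine filter_congr fun a ha => ?_
  dsimp only
  have hb' := hA.fst_lt_snd b hb
  constructor
  · rintro ⟨h1, -, h3⟩
    exact ⟨h1.trans hb', h3.le, h1⟩
  · rintro ⟨h1, h2, h3⟩
    refine ⟨h3, hb', lt_of_le_of_ne h2 fun h => ?_⟩
    rw [hA.injOn_snd hb ha h] at h3
    exact h3.false

theorem mono (hA : IsArcDiagram n A) {m : ℕ} (hnm : n ≤ m) : IsArcDiagram m A :=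
  { hA with snd_le := fun p hp => (hA.snd_le p hp).trans hnm }

theorem insert (hA : IsArcDiagram n A) {i : ℕ} (hi1 : 1 ≤ i) (hin : i ≤ n)
    (hi : i ∉ A.image Prod.fst) : IsArcDiagram (n + 1) (insert (i, n + 1) A) := by
  have hsnd : ∀ p ∈ A, p.2 ≠ n + 1 := fun p hp => by have := hA.snd_le p hp; omega
  refine ⟨?_, ?_, ?_, ?_, ?_⟩
  · simp only [mem_insert, forall_eq_or_imp]
    exact ⟨hi1, hA.one_le_fst⟩
  · simp only [mem_insert, forall_eq_or_imp]
    exact ⟨by omega, hA.fst_lt_snd⟩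
  · simp only [mem_insert, forall_eq_or_imp]
    exact ⟨le_rfl, fun p hp => (hA.snd_le p hp).trans n.le_succ⟩
  · rw [coe_insert, Set.injOn_insert fun h => hi (mem_image.2 ⟨_, h, rfl⟩)]
    exact ⟨hA.injOn_fst, fun ⟨p, hp, hpi⟩ => hi (mem_image.2 ⟨p, hp, hpi⟩)⟩
  · rw [coe_insert, Set.injOn_insert fun h => hsnd _ h rfl]
    exact ⟨hA.injOn_snd, fun ⟨p, hp, hpj⟩ => hsnd p hp hpj⟩

theorem filter_snd_eq_of_mem (hA : IsArcDiagram n A) {j : ℕ} (hj : j ∈ A.image Prod.snd) :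
    A.filter (·.2 = j) = {(Nat.nth (· ∈ pending A j) (closerRank A j), j)} := by
  obtain ⟨p, hp, rfl⟩ := mem_image.1 hj
  rw [closerRank, Nat.nth_count (hA.opener_snd hp ▸ hA.fst_mem_pending hp), hA.opener_snd hp]
  ext q
  simp only [mem_filter, mem_singleton]
  constructor
  · rintro ⟨hq, hqp⟩
    rw [hA.injOn_snd hq hp hqp]
  · rintro rfl
    exact ⟨hp, rfl⟩

theorem eq_of_closerRank_eq (hA : IsArcDiagram n A) (hA' : IsArcDiagram n A')
    (hfst : A.image Prod.fst = A'.image Prod.fst) (hsnd : A.image Prod.snd = A'.image Prod.snd)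
    (hrank : ∀ j ∈ A.image Prod.snd, closerRank A j = closerRank A' j) : A = A' := by
  have hprefix : ∀ j, A.filter (·.2 < j) = A'.filter (·.2 < j) := by
    intro j
    induction j with
    | zero => simp
    | succ j ih =>
      have hpending : pending A j = pending A' j := by
        rw [hA.pending_eq, hA'.pending_eq, hfst, ih]
      rw [filter_snd_lt_add_one, filter_snd_lt_add_one, ih]
      by_cases hj : j ∈ A.image Prod.snd
      · rw [hA.filter_snd_eq_of_mem hj, hA'.filter_snd_eq_of_mem (hsnd ▸ hj), hrank j hj,
          hpending]
      · have hj' : j ∉ A'.image Prod.snd := hsnd ▸ hj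
        rw [filter_eq_empty_iff.2 fun p hp h => hj (mem_image.2 ⟨p, hp, h⟩),
          filter_eq_empty_iff.2 fun p hp h => hj' (mem_image.2 ⟨p, hp, h⟩)]
  have hall : ∀ {B}, IsArcDiagram n B → B.filter (·.2 < n + 1) = B :=
    fun hB => filter_true_of_mem fun p hp => Nat.lt_succ_of_le (hB.snd_le p hp)
  rw [← hall hA, ← hall hA', hprefix]

end IsArcDiagram

namespace ArcDiagram

open Finset

/-- One step of the left-to-right sweep: the first component holds the openers still waiting for
their closer; the closer `j` is matched with the waiting opener of rank `c j`. -/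
def sweepStep (L R : Finset ℕ) (c : ℕ → ℕ) (j : ℕ) (st : Finset ℕ × Finset (ℕ × ℕ)) :
    Finset ℕ × Finset (ℕ × ℕ) :=
  if j ∈ R then
    (st.1.erase (Nat.nth (· ∈ st.1) (c j)) ∪ L ∩ {j}, insert (Nat.nth (· ∈ st.1) (c j), j) st.2)
  else (st.1 ∪ L ∩ {j}, st.2)

def sweep (L R : Finset ℕ) (c : ℕ → ℕ) : ℕ → Finset ℕ × Finset (ℕ × ℕ)
  | 0 => (∅, ∅)
  | j + 1 => sweepStep L R c (j + 1) (sweep L R c j)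

structure SweepInv (L R : Finset ℕ) (j : ℕ) (st : Finset ℕ × Finset (ℕ × ℕ)) : Prop where
  isArcDiagram : IsArcDiagram j st.2
  disjoint : Disjoint st.1 (st.2.image Prod.fst)
  union_eq : st.1 ∪ st.2.image Prod.fst = L ∩ Icc 1 j
  image_snd : st.2.image Prod.snd = R ∩ Icc 1 j

namespace SweepInv

variable {L R : Finset ℕ} {c : ℕ → ℕ} {j : ℕ} {st : Finset ℕ × Finset (ℕ × ℕ)}

theorem card_fst (h : SweepInv L R j st) :
    st.1.card = (L ∩ Icc 1 j).card - (R ∩ Icc 1 j).card := by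
  rw [← h.union_eq, ← h.image_snd, card_union_of_disjoint h.disjoint,
    card_image_of_injOn h.isArcDiagram.injOn_fst, card_image_of_injOn h.isArcDiagram.injOn_snd]
  omega

theorem mem_fst (h : SweepInv L R j st) {i : ℕ} (hi : i ∈ st.1) : i ∈ L ∧ 1 ≤ i ∧ i ≤ j := by
  have := h.union_eq ▸ mem_union_left _ hi
  simpa using this

theorem fst_le (h : SweepInv L R j st) : ∀ i ∈ st.2.image Prod.fst, i ≤ j := by
  intro i hi
  obtain ⟨p, hp, rfl⟩ := mem_image.1 hi
  exact (h.isArcDiagram.fst_lt_snd p hp).le.trans (h.isArcDiagram.snd_le p hp)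

theorem lt_card_fst (h : SweepInv L R j st)
    (hc : ∀ k ∈ R, c k < (L ∩ Ico 1 k).card - (R ∩ Ico 1 k).card) (hR : j + 1 ∈ R) :
    c (j + 1) < st.1.card := by
  simpa [h.card_fst, Ico_add_one_right_eq_Icc] using hc _ hR

theorem step_of_mem (h : SweepInv L R j st) (hR : j + 1 ∈ R) (hc : c (j + 1) < st.1.card) :
    SweepInv L R (j + 1) (sweepStep L R c (j + 1) st) := by
  simp only [sweepStep, if_pos hR]
  set i := Nat.nth (· ∈ st.1) (c (j + 1))
  have hi : i ∈ st.1 := Nat.nth_mem_finset hc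
  have hiB : i ∉ st.2.image Prod.fst := disjoint_left.1 h.disjoint hi
  obtain ⟨-, hi1, hij⟩ := h.mem_fst hi
  have hfst := h.fst_le
  have hdisj := disjoint_left.1 h.disjoint
  have hunion : ∀ x, x ∈ st.1 ∨ x ∈ st.2.image Prod.fst ↔ x ∈ L ∧ 1 ≤ x ∧ x ≤ j := fun x => by
    rw [← mem_union, h.union_eq, mem_inter, mem_Icc]
  refine ⟨h.isArcDiagram.insert hi1 hij hiB, ?_, ?_, ?_⟩
  · rw [image_insert, disjoint_left]
    intro x hx hx'
    simp only [mem_union, mem_erase, mem_inter, mem_singleton, mem_insert] at hx hx'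
    grind
  · ext x
    simp only [image_insert, mem_union, mem_erase, mem_inter, mem_singleton, mem_insert, mem_Icc]
    grind
  · ext x
    simp only [image_insert, h.image_snd, mem_insert, mem_inter, mem_Icc]
    grind

theorem step_of_not_mem (h : SweepInv L R j st) (hR : j + 1 ∉ R) :
    SweepInv L R (j + 1) (sweepStep L R c (j + 1) st) := by
  simp only [sweepStep, if_neg hR]
  have hfst := h.fst_le
  have hdisj := disjoint_left.1 h.disjoint
  have hunion : ∀ x, x ∈ st.1 ∨ x ∈ st.2.image Prod.fst ↔ x ∈ L ∧ 1 ≤ x ∧ x ≤ j := fun x => by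
    rw [← mem_union, h.union_eq, mem_inter, mem_Icc]
  refine ⟨h.isArcDiagram.mono j.le_succ, ?_, ?_, ?_⟩
  · rw [disjoint_left]
    intro x hx hx'
    simp only [mem_union, mem_inter, mem_singleton] at hx
    grind
  · ext x
    simp only [mem_union, mem_inter, mem_singleton, mem_Icc]
    grind
  · ext x
    simp only [h.image_snd, mem_inter, mem_Icc]
    grind

end SweepInv

section Sweep

variable {L R : Finset ℕ} {c : ℕ → ℕ}

theorem sweepInv_sweep (hc : ∀ j ∈ R, c j < (L ∩ Ico 1 j).card - (R ∩ Ico 1 j).card) :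
    ∀ j, SweepInv L R j (sweep L R c j)
  | 0 => by refine ⟨⟨?_, ?_, ?_, ?_, ?_⟩, ?_, ?_, ?_⟩ <;> simp [sweep]
  | j + 1 => by
    have h := sweepInv_sweep hc j
    by_cases hR : j + 1 ∈ R
    · exact h.step_of_mem hR (h.lt_card_fst hc hR)
    · exact h.step_of_not_mem hR

theorem filter_sweep_snd (hc : ∀ j ∈ R, c j < (L ∩ Ico 1 j).card - (R ∩ Ico 1 j).card)
    {m j : ℕ} (hmj : m ≤ j) : (sweep L R c j).2.filter (·.2 ≤ m) = (sweep L R c m).2 := by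
  induction j, hmj using Nat.le_induction with
  | base => exact filter_true_of_mem (sweepInv_sweep hc m).isArcDiagram.snd_le
  | succ j hmj ih =>
    rw [← ih, sweep, sweepStep]
    split_ifs
    · rw [filter_insert, if_neg (by omega)]
    · rfl

end Sweep

structure SweepAdmissible (n : ℕ) (L R : Finset ℕ) (c : ℕ → ℕ) : Prop where
  left_subset : L ⊆ Icc 1 n
  right_subset : R ⊆ Icc 1 n
  card_left : L.card = R.card
  -- the right-hand side counts the openers pending just before `j`
  lt : ∀ j ∈ R, c j < (L ∩ Ico 1 j).card - (R ∩ Ico 1 j).card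

namespace SweepAdmissible

variable {n : ℕ} {L R : Finset ℕ} {c : ℕ → ℕ}

theorem sweep_fst_eq_empty (h : SweepAdmissible n L R c) : (sweep L R c n).1 = ∅ := by
  rw [← card_eq_zero, (sweepInv_sweep h.lt n).card_fst, inter_eq_left.2 h.left_subset,
    inter_eq_left.2 h.right_subset, h.card_left, Nat.sub_self]

theorem image_fst_sweep (h : SweepAdmissible n L R c) : (sweep L R c n).2.image Prod.fst = L := by
  have hunion := (sweepInv_sweep h.lt n).union_eq
  rwa [h.sweep_fst_eq_empty, empty_union, inter_eq_left.2 h.left_subset] at hunion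

theorem image_snd_sweep (h : SweepAdmissible n L R c) : (sweep L R c n).2.image Prod.snd = R := by
  rw [(sweepInv_sweep h.lt n).image_snd, inter_eq_left.2 h.right_subset]

theorem isArcDiagram_sweep (h : SweepAdmissible n L R c) : IsArcDiagram n (sweep L R c n).2 :=
  (sweepInv_sweep h.lt n).isArcDiagram

theorem pending_sweep (h : SweepAdmissible n L R c) {j : ℕ} (hj : j + 1 ∈ R) :
    pending (sweep L R c n).2 (j + 1) = (sweep L R c j).1 := by
  have hjn : j ≤ n := by have := mem_Icc.1 (h.right_subset hj); omega
  have hprefix : (sweep L R c n).2.filter (·.2 < j + 1) = (sweep L R c j).2 := by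
    simp only [Nat.lt_succ_iff]
    exact filter_sweep_snd h.lt hjn
  have hinv := sweepInv_sweep h.lt j
  rw [h.isArcDiagram_sweep.pending_eq, h.image_fst_sweep, Ico_add_one_right_eq_Icc, hprefix,
    ← hinv.union_eq, union_sdiff_cancel_right hinv.disjoint]

theorem closerRank_sweep (h : SweepAdmissible n L R c) {j : ℕ} (hj : j ∈ R) :
    closerRank (sweep L R c n).2 j = c j := by
  obtain ⟨j, rfl⟩ : ∃ k, j = k + 1 := Nat.exists_eq_add_one.2 (mem_Icc.1 (h.right_subset hj)).1
  have hjn : j + 1 ≤ n := (mem_Icc.1 (h.right_subset hj)).2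
  have hinv := sweepInv_sweep h.lt j
  set i := Nat.nth (· ∈ (sweep L R c j).1) (c (j + 1))
  have hmem : (i, j + 1) ∈ (sweep L R c n).2 := by
    have hnew : (i, j + 1) ∈ (sweep L R c (j + 1)).2 := by simp [sweep, sweepStep, hj, i]
    rw [← filter_sweep_snd h.lt hjn] at hnew
    exact mem_of_mem_filter _ hnew
  rw [closerRank, h.pending_sweep hj, h.isArcDiagram_sweep.opener_snd hmem]
  exact Nat.count_nth_mem_finset (hinv.lt_card_fst h.lt hj)

end SweepAdmissible

def flip (n : ℕ) (A : Finset (ℕ × ℕ)) : Finset (ℕ × ℕ) :=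
  (sweep (A.image Prod.fst) (A.image Prod.snd)
    (fun j => (pending A j).card - 1 - closerRank A j) n).2

end ArcDiagram

namespace IsArcDiagram

open Finset ArcDiagram

variable {n : ℕ} {A : Finset (ℕ × ℕ)}

theorem sweepAdmissible (hA : IsArcDiagram n A) :
    SweepAdmissible n (A.image Prod.fst) (A.image Prod.snd)
      (fun j => (pending A j).card - 1 - closerRank A j) where
  left_subset := image_subset_iff.2 fun _ => hA.fst_mem_Icc
  right_subset := image_subset_iff.2 fun _ => hA.snd_mem_Icc
  card_left := by rw [card_image_of_injOn hA.injOn_fst, card_image_of_injOn hA.injOn_snd]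
  lt := by
    intro j hj
    have := hA.closerRank_lt hj
    rw [← hA.card_pending]
    omega

theorem flip (hA : IsArcDiagram n A) : IsArcDiagram n (flip n A) :=
  hA.sweepAdmissible.isArcDiagram_sweep

theorem image_fst_flip (hA : IsArcDiagram n A) :
    (ArcDiagram.flip n A).image Prod.fst = A.image Prod.fst :=
  hA.sweepAdmissible.image_fst_sweep

theorem image_snd_flip (hA : IsArcDiagram n A) :
    (ArcDiagram.flip n A).image Prod.snd = A.image Prod.snd :=
  hA.sweepAdmissible.image_snd_sweep

theorem card_pending_flip (hA : IsArcDiagram n A) (j : ℕ) :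
    (pending (ArcDiagram.flip n A) j).card = (pending A j).card := by
  rw [hA.flip.card_pending, hA.card_pending, hA.image_fst_flip, hA.image_snd_flip]

theorem closerRank_flip (hA : IsArcDiagram n A) {j : ℕ} (hj : j ∈ A.image Prod.snd) :
    closerRank (ArcDiagram.flip n A) j = (pending A j).card - 1 - closerRank A j :=
  hA.sweepAdmissible.closerRank_sweep hj

theorem flip_flip (hA : IsArcDiagram n A) : ArcDiagram.flip n (ArcDiagram.flip n A) = A := by
  refine hA.flip.flip.eq_of_closerRank_eq hA (by rw [hA.flip.image_fst_flip, hA.image_fst_flip])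
    (by rw [hA.flip.image_snd_flip, hA.image_snd_flip]) fun j hj => ?_
  rw [hA.flip.image_snd_flip, hA.image_snd_flip] at hj
  rw [hA.flip.closerRank_flip (hA.image_snd_flip ▸ hj), hA.card_pending_flip,
    hA.closerRank_flip hj]
  have := hA.closerRank_lt hj
  omega

theorem crossCount_flip (hA : IsArcDiagram n A) :
    crossCount (ArcDiagram.flip n A) = nestCount A := by
  rw [hA.flip.crossCount_eq_sum, hA.nestCount_eq_sum, hA.image_snd_flip]
  refine sum_congr rfl fun j hj => ?_
  rw [hA.card_pending_flip, hA.closerRank_flip hj]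
  have := hA.closerRank_lt hj
  omega

theorem nestCount_flip (hA : IsArcDiagram n A) :
    nestCount (ArcDiagram.flip n A) = crossCount A := by
  rw [hA.flip.nestCount_eq_sum, hA.crossCount_eq_sum, hA.image_snd_flip]
  exact sum_congr rfl fun j hj => hA.closerRank_flip hj

open Relation

theorem le_of_reflTransGen (hA : IsArcDiagram n A) {a b : ℕ}
    (h : ReflTransGen (fun x y => (x, y) ∈ A) a b) : a ≤ b := by
  induction h with
  | refl => exact le_rfl
  | tail _ hbc ih => exact ih.trans (hA.fst_lt_snd _ hbc).le

theorem eqvGen_iff (hA : IsArcDiagram n A) {a b : ℕ} :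
    EqvGen (fun x y => (x, y) ∈ A) a b ↔
      ReflTransGen (fun x y => (x, y) ∈ A) a b ∨ ReflTransGen (fun x y => (x, y) ∈ A) b a := by
  have hright : Relator.RightUnique fun x y => (x, y) ∈ A := fun _ _ _ h h' =>
    congrArg Prod.snd (hA.injOn_fst h h' rfl)
  have hleft : Relator.RightUnique (Function.swap fun x y => (x, y) ∈ A) := fun _ _ _ h h' =>
    congrArg Prod.fst (hA.injOn_snd h h' rfl)
  refine ⟨fun h => ?_, ?_⟩
  · induction h with
    | rel x y hxy => exact Or.inl (ReflTransGen.single hxy)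
    | refl => exact Or.inl ReflTransGen.refl
    | symm x y _ ih => exact ih.symm
    | trans x y z _ _ ihxy ihyz =>
      rcases ihxy with hxy | hyx <;> rcases ihyz with hyz | hzy
      · exact Or.inl (hxy.trans hyz)
      · exact (ReflTransGen.total_of_right_unique hleft (reflTransGen_swap.2 hxy)
          (reflTransGen_swap.2 hzy)).symm.imp reflTransGen_swap.1 reflTransGen_swap.1
      · exact ReflTransGen.total_of_right_unique hright hyx hyz
      · exact Or.inr (hzy.trans hyx)
  · rintro (h | h)
    exacts [EqvGen.reflTransGen_le_eqvGen _ _ _ h,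
      EqvGen.symm _ _ (EqvGen.reflTransGen_le_eqvGen _ _ _ h)]

end IsArcDiagram

namespace SetPartitionA

open Finset Relation ArcDiagram

variable {n : ℕ}

theorem ext_blocks {P Q : SetPartitionA n} (h : P.blocks = Q.blocks) : P = Q := by
  cases P
  cases Q
  cases h
  rfl

theorem mem_Icc_of_mem_block (P : SetPartitionA n) {B : Finset ℕ} (hB : B ∈ P.blocks) {x : ℕ}
    (hx : x ∈ B) : x ∈ Icc 1 n :=
  (P.cover x).1 ⟨B, hB, hx⟩

theorem block_eq_of_mem (P : SetPartitionA n) {B B' : Finset ℕ} (hB : B ∈ P.blocks)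
    (hB' : B' ∈ P.blocks) {x : ℕ} (hx : x ∈ B) (hx' : x ∈ B') : B = B' := by
  by_contra hne
  exact disjoint_left.1 (P.disj B hB B' hB' hne) hx hx'

theorem mem_arcs (P : SetPartitionA n) {p : ℕ × ℕ} : p ∈ P.arcs ↔ P.IsArc p.1 p.2 := by
  rw [arcs, mem_filter, mem_product, and_iff_right_iff_imp]
  rintro ⟨-, B, hB, h1, h2, -⟩
  exact ⟨P.mem_Icc_of_mem_block hB h1, P.mem_Icc_of_mem_block hB h2⟩

theorem exists_isArc_fst (P : SetPartitionA n) {B : Finset ℕ} (hB : B ∈ P.blocks) {x y : ℕ}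
    (hx : x ∈ B) (hy : y ∈ B) (hxy : x < y) : ∃ m ∈ B, x < m ∧ m ≤ y ∧ P.IsArc x m := by
  have hne : (B.filter (x < ·)).Nonempty := ⟨y, mem_filter.2 ⟨hy, hxy⟩⟩
  obtain ⟨hmB, hxm⟩ := mem_filter.1 (min'_mem _ hne)
  refine ⟨_, hmB, hxm, min'_le _ _ (mem_filter.2 ⟨hy, hxy⟩),
    hxm, B, hB, hx, hmB, fun k hk ⟨hxk, hkm⟩ => ?_⟩
  exact (min'_le _ k (mem_filter.2 ⟨hk, hxk⟩)).not_gt hkm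

theorem exists_isArc_snd (P : SetPartitionA n) {B : Finset ℕ} (hB : B ∈ P.blocks) {x y : ℕ}
    (hx : x ∈ B) (hy : y ∈ B) (hxy : x < y) : ∃ m ∈ B, x ≤ m ∧ m < y ∧ P.IsArc m y := by
  have hne : (B.filter (· < y)).Nonempty := ⟨x, mem_filter.2 ⟨hx, hxy⟩⟩
  obtain ⟨hmB, hmy⟩ := mem_filter.1 (max'_mem _ hne)
  refine ⟨_, hmB, le_max' _ _ (mem_filter.2 ⟨hx, hxy⟩), hmy,
    hmy, B, hB, hmB, hy, fun k hk ⟨hmk, hky⟩ => ?_⟩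
  exact (le_max' _ k (mem_filter.2 ⟨hk, hky⟩)).not_gt hmk

theorem isArcDiagram_arcs (P : SetPartitionA n) : IsArcDiagram n P.arcs := by
  have hIcc : ∀ p ∈ P.arcs, p.1 ∈ Icc 1 n ∧ p.2 ∈ Icc 1 n := fun p hp =>
    mem_product.1 (mem_filter.1 hp).1
  refine ⟨fun p hp => (mem_Icc.1 (hIcc p hp).1).1, fun p hp => (P.mem_arcs.1 hp).1,
    fun p hp => (mem_Icc.1 (hIcc p hp).2).2, ?_, ?_⟩
  · intro p hp q hq hpq
    obtain ⟨-, B, hB, hp1, hp2, hpB⟩ := P.mem_arcs.1 hp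
    obtain ⟨-, B', hB', hq1, hq2, hqB⟩ := P.mem_arcs.1 hq
    rw [← hpq] at hq1
    obtain rfl := P.block_eq_of_mem hB hB' hp1 hq1
    refine Prod.ext hpq (le_antisymm ?_ ?_)
    · exact not_lt.1 fun h => hpB q.2 hq2 ⟨by rw [hpq]; exact (P.mem_arcs.1 hq).1, h⟩
    · exact not_lt.1 fun h => hqB p.2 hp2 ⟨by rw [← hpq]; exact (P.mem_arcs.1 hp).1, h⟩
  · intro p hp q hq hpq
    obtain ⟨-, B, hB, hp1, hp2, hpB⟩ := P.mem_arcs.1 hp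
    obtain ⟨-, B', hB', hq1, hq2, hqB⟩ := P.mem_arcs.1 hq
    rw [← hpq] at hq2
    obtain rfl := P.block_eq_of_mem hB hB' hp2 hq2
    refine Prod.ext (le_antisymm ?_ ?_) hpq
    · exact not_lt.1 fun h => hqB p.1 hp1 ⟨h, by rw [← hpq]; exact (P.mem_arcs.1 hp).1⟩
    · exact not_lt.1 fun h => hpB q.1 hq1 ⟨h, by rw [hpq]; exact (P.mem_arcs.1 hq).1⟩

theorem openers_eq (P : SetPartitionA n) : P.openers = P.arcs.image Prod.fst := by
  ext i
  simp only [openers, mem_filter, mem_image]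
  constructor
  · rintro ⟨-, B, hB, hi, j, hj, hij⟩
    obtain ⟨m, -, -, -, harc⟩ := P.exists_isArc_fst hB hi hj hij
    exact ⟨(i, m), P.mem_arcs.2 harc, rfl⟩
  · rintro ⟨p, hp, rfl⟩
    obtain ⟨hlt, B, hB, h1, h2, -⟩ := P.mem_arcs.1 hp
    exact ⟨P.mem_Icc_of_mem_block hB h1, B, hB, h1, p.2, h2, hlt⟩

theorem closers_eq (P : SetPartitionA n) : P.closers = P.arcs.image Prod.snd := by
  ext j
  simp only [closers, mem_filter, mem_image]
  constructor
  · rintro ⟨-, B, hB, hj, i, hi, hij⟩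
    obtain ⟨m, -, -, -, harc⟩ := P.exists_isArc_snd hB hi hj hij
    exact ⟨(m, j), P.mem_arcs.2 harc, rfl⟩
  · rintro ⟨p, hp, rfl⟩
    obtain ⟨hlt, B, hB, h1, h2, -⟩ := P.mem_arcs.1 hp
    exact ⟨P.mem_Icc_of_mem_block hB h2, B, hB, h2, p.1, h1, hlt⟩

theorem crossings_eq (P : SetPartitionA n) : P.crossings = crossCount P.arcs := rfl

theorem nestings_eq (P : SetPartitionA n) : P.nestings = nestCount P.arcs := rfl


theorem reflTransGen_of_mem_block (P : SetPartitionA n) {B : Finset ℕ} (hB : B ∈ P.blocks)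
    {x : ℕ} (hx : x ∈ B) :
    ∀ y ∈ B, x ≤ y → ReflTransGen (fun a b => (a, b) ∈ P.arcs) x y := by
  intro y
  induction y using Nat.strong_induction_on with
  | _ y ih =>
    intro hy hxy
    rcases hxy.eq_or_lt with rfl | hlt
    · exact ReflTransGen.refl
    · obtain ⟨m, hm, hxm, hmy, harc⟩ := P.exists_isArc_snd hB hx hy hlt
      exact (ih m hmy hm hxm).tail (P.mem_arcs.2 harc)

theorem filter_eqvGen_eq_block (P : SetPartitionA n) {B : Finset ℕ} (hB : B ∈ P.blocks)
    {i : ℕ} (hi : i ∈ B) :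
    (Icc 1 n).filter (EqvGen (fun a b => (a, b) ∈ P.arcs) i) = B := by
  have hsame : ∀ a b, EqvGen (fun a b => (a, b) ∈ P.arcs) a b →
      ∀ B ∈ P.blocks, (a ∈ B ↔ b ∈ B) := by
    intro a b h
    induction h with
    | rel a b hab =>
      intro B hB
      obtain ⟨-, B', hB', ha, hb, -⟩ := P.mem_arcs.1 hab
      constructor
      · intro haB; rwa [P.block_eq_of_mem hB hB' haB ha]
      · intro hbB; rwa [P.block_eq_of_mem hB hB' hbB hb]
    | refl => exact fun _ _ => Iff.rfl
    | symm _ _ _ ih => exact fun B hB => (ih B hB).symm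
    | trans _ _ _ _ _ ih ih' => exact fun B hB => (ih B hB).trans (ih' B hB)
  ext y
  rw [mem_filter]
  constructor
  · rintro ⟨-, hy⟩
    exact (hsame i y hy B hB).1 hi
  · intro hy
    refine ⟨P.mem_Icc_of_mem_block hB hy, ?_⟩
    rcases le_total i y with h | h
    · exact EqvGen.reflTransGen_le_eqvGen _ _ _ (P.reflTransGen_of_mem_block hB hi y hy h)
    · exact EqvGen.symm _ _
        (EqvGen.reflTransGen_le_eqvGen _ _ _ (P.reflTransGen_of_mem_block hB hy i hi h))

def ofArcs (n : ℕ) (A : Finset (ℕ × ℕ)) : SetPartitionA n where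
  blocks := (Icc 1 n).image fun i => (Icc 1 n).filter (EqvGen (fun a b => (a, b) ∈ A) i)
  nonempty := by
    intro B hB
    obtain ⟨i, hi, rfl⟩ := mem_image.1 hB
    exact ⟨i, mem_filter.2 ⟨hi, EqvGen.refl i⟩⟩
  disj := by
    intro B hB B' hB' hne
    obtain ⟨i, -, rfl⟩ := mem_image.1 hB
    obtain ⟨i', -, rfl⟩ := mem_image.1 hB'
    refine disjoint_left.2 fun x hx hx' => hne (filter_congr fun y _ => ?_)
    have hii' := (EqvGen.is_equivalence _).trans (mem_filter.1 hx).2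
      ((EqvGen.is_equivalence _).symm (mem_filter.1 hx').2)
    exact ⟨(EqvGen.is_equivalence _).trans ((EqvGen.is_equivalence _).symm hii'),
      (EqvGen.is_equivalence _).trans hii'⟩
  cover := by
    intro i
    constructor
    · rintro ⟨B, hB, hiB⟩
      obtain ⟨j, -, rfl⟩ := mem_image.1 hB
      exact (mem_filter.1 hiB).1
    · intro hi
      exact ⟨_, mem_image_of_mem _ hi, mem_filter.2 ⟨hi, EqvGen.refl i⟩⟩

theorem ofArcs_arcs (P : SetPartitionA n) : ofArcs n P.arcs = P := by
  refine ext_blocks (ext fun B => ⟨fun hB => ?_, fun hB => ?_⟩)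
  · obtain ⟨i, hi, rfl⟩ := mem_image.1 hB
    obtain ⟨B, hB, hiB⟩ := (P.cover i).2 hi
    rwa [P.filter_eqvGen_eq_block hB hiB]
  · obtain ⟨i, hi⟩ := P.nonempty B hB
    exact mem_image.2 ⟨i, P.mem_Icc_of_mem_block hB hi, P.filter_eqvGen_eq_block hB hi⟩

theorem arcs_ofArcs {A : Finset (ℕ × ℕ)} (hA : IsArcDiagram n A) : (ofArcs n A).arcs = A := by
  ext ⟨x, y⟩
  rw [mem_arcs]
  dsimp only
  constructor
  · rintro ⟨hxy, B, hB, hx, hy, hbetween⟩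
    obtain ⟨i, -, rfl⟩ := mem_image.1 hB
    have hix := (mem_filter.1 hx).2
    rcases hA.eqvGen_iff.1 (EqvGen.trans _ _ _ (EqvGen.symm _ _ hix) (mem_filter.1 hy).2)
      with hreach | hreach
    · rcases ReflTransGen.cases_head hreach with rfl | ⟨z, hxz, hzy⟩
      · exact absurd hxy (lt_irrefl _)
      · have hz : z ∈ (Icc 1 n).filter (EqvGen (fun a b => (a, b) ∈ A) i) :=
          mem_filter.2 ⟨hA.snd_mem_Icc hxz, EqvGen.trans _ _ _ hix (EqvGen.rel _ _ hxz)⟩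
        have hzy' := hA.le_of_reflTransGen hzy
        have hxz' := hA.fst_lt_snd _ hxz
        obtain rfl : z = y := by
          by_contra hne
          exact hbetween z hz ⟨hxz', lt_of_le_of_ne hzy' hne⟩
        exact hxz
    · exact absurd (hA.le_of_reflTransGen hreach) (not_le.2 hxy)
  · intro hp
    refine ⟨hA.fst_lt_snd _ hp, _, mem_image_of_mem _ (hA.fst_mem_Icc hp),
      mem_filter.2 ⟨hA.fst_mem_Icc hp, EqvGen.refl x⟩,
      mem_filter.2 ⟨hA.snd_mem_Icc hp, EqvGen.rel _ _ hp⟩, fun k hk ⟨hxk, hky⟩ => ?_⟩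
    rcases hA.eqvGen_iff.1 (mem_filter.1 hk).2 with h | h
    · rcases ReflTransGen.cases_head h with rfl | ⟨z, hxz, hzk⟩
      · exact lt_irrefl _ hxk
      · obtain rfl : z = y := congrArg Prod.snd (hA.injOn_fst hxz hp rfl)
        exact (hA.le_of_reflTransGen hzk).not_gt hky
    · exact (hA.le_of_reflTransGen h).not_gt hxk

def flip (P : SetPartitionA n) : SetPartitionA n :=
  ofArcs n (ArcDiagram.flip n P.arcs)

theorem arcs_flip (P : SetPartitionA n) : P.flip.arcs = ArcDiagram.flip n P.arcs :=
  arcs_ofArcs P.isArcDiagram_arcs.flip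

theorem flip_involutive : Function.Involutive (flip : SetPartitionA n → SetPartitionA n) :=
  fun P => by rw [flip, arcs_flip, P.isArcDiagram_arcs.flip_flip, ofArcs_arcs]

end SetPartitionA

theorem stmt1_general (n : ℕ) :
    ∃ Φ : SetPartitionA n → SetPartitionA n, Function.Bijective Φ ∧
      ∀ P : SetPartitionA n,
        (Φ P).openers = P.openers ∧ (Φ P).closers = P.closers ∧
        (Φ P).crossings = P.nestings ∧ (Φ P).nestings = P.crossings := by
  refine ⟨SetPartitionA.flip, SetPartitionA.flip_involutive.bijective, fun P => ?_⟩
  have hA := P.isArcDiagram_arcs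
  simp only [SetPartitionA.openers_eq, SetPartitionA.closers_eq, SetPartitionA.crossings_eq,
    SetPartitionA.nestings_eq, SetPartitionA.arcs_flip]
  exact ⟨hA.image_fst_flip, hA.image_snd_flip, hA.crossCount_flip, hA.nestCount_flip⟩

theorem stmt1 (n : ℕ) (hn : 0 < n) :
    ∃ Φ : SetPartitionA n → SetPartitionA n, Function.Bijective Φ ∧
      ∀ P : SetPartitionA n,
        (Φ P).openers = P.openers ∧ (Φ P).closers = P.closers ∧
        (Φ P).crossings = P.nestings ∧ (Φ P).nestings = P.crossings :=
  stmt1_general n
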